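/- Let L, T ≥ 1 and M ≥ 2 be integers. Identify an M-tuple of diagonal matrices T_i = I_T ⊗ T̃_i ∈ ℝ^{TL×TL} (i = 1,…,M), with T̃_i ∈ ℝ^{L×L} diagonal, with the point of ℝ^{LM} formed by the diagonal entries of T̃_1,…,T̃_M, equipped with Lebesgue measure. Then for Lebesgue-almost every such tuple, (T_1,…,T_M) satisfies the block linear independence condition. -/

import Mathlib

open Matrix Submodule Module MeasureTheory

/-- `sp^{(T)}(V) = ∑_{k=1}^L dim(P_k V)`, where `P_k` projects onto the entries of the
`k`-th coherence period. -/
noncomputable def spT (T L : ℕ) (V : Submodule ℝ (Fin T × Fin L → ℝ)) : ℕ :=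
  ∑ k : Fin L, finrank ℝ ↥(V.map (LinearMap.funLeft ℝ ℝ (fun s : Fin T => (s, k))))

/-- The block diagonal matrix `I_T ⊗ diag(d)` on `ℝ^{T×L}`. -/
def blockDiag (T L : ℕ) (d : Fin L → ℝ) : Matrix (Fin T × Fin L) (Fin T × Fin L) ℝ :=
  Matrix.diagonal fun p => d p.2

/-- The block linear independence condition: for every set `A ⊆ ℤ^M` with `|A| = L` and
every subspace `V ⊆ ℝ^{TL}`, `dim(∑_{x ∈ A} (∏ T_i^{x_i}) V) = sp^{(T)}(V)`, where
`T_i = I_T ⊗ diag(t i)`. -/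
def BlockLinIndepCond (T L M : ℕ) (t : Fin M → Fin L → ℝ) : Prop :=
  ∀ A : Finset (Fin M → ℤ), A.card = L →
    ∀ V : Submodule ℝ (Fin T × Fin L → ℝ),
      finrank ℝ ↥(⨆ x ∈ A, V.map (Matrix.toLin'
        (blockDiag T L fun ℓ => ∏ i, t i ℓ ^ x i))) = spT T L V

open MvPolynomial in
private lemma polyAE {n : ℕ} : ∀ (p : MvPolynomial (Fin n) ℝ), p ≠ 0 →
    ∀ᵐ x : Fin n → ℝ ∂volume, MvPolynomial.eval x p ≠ 0 := by
  induction n with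
  | zero =>
    intro p hp
    refine Filter.Eventually.of_forall fun x => ?_
    rw [p.eq_C_of_isEmpty, eval_C]
    intro h
    exact hp (by rw [p.eq_C_of_isEmpty, h, map_zero])
  | succ n ih =>
    intro p hp
    set q := finSuccEquiv ℝ n p with hqdef
    have hq : q ≠ 0 := fun h => hp ((map_eq_zero_iff _ (AlgEquiv.injective _)).mp h)
    have hlead : q.leadingCoeff ≠ 0 := Polynomial.leadingCoeff_ne_zero.mpr hq
    have h1 := ih q.leadingCoeff hlead
    set S : Set ((Fin n → ℝ) × ℝ) :=
      {z | Polynomial.eval z.2 (Polynomial.map (eval z.1) q) = 0} with hS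
    have hfun : ∀ z : (Fin n → ℝ) × ℝ, Polynomial.eval z.2 (Polynomial.map (eval z.1) q)
        = ∑ i ∈ Finset.range (q.natDegree + 1), eval z.1 (q.coeff i) * z.2 ^ i := by
      intro z
      rw [Polynomial.eval_eq_sum_range'
        (n := q.natDegree + 1) (lt_of_le_of_lt Polynomial.natDegree_map_le (Nat.lt_succ_self _))]
      simp [Polynomial.coeff_map]
    have hcont : Continuous fun z : (Fin n → ℝ) × ℝ =>
        Polynomial.eval z.2 (Polynomial.map (eval z.1) q) := by
      simp only [hfun]
      exact continuous_finset_sum _ fun i _ =>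
        ((MvPolynomial.continuous_eval _).comp continuous_fst).mul (continuous_snd.pow i)
    have hSmeas : MeasurableSet S := hcont.measurable (measurableSet_singleton 0)
    have hnull : (volume.prod volume) S = 0 := by
      rw [Measure.measure_prod_null hSmeas]
      filter_upwards [h1] with s hs
      have hmap : Polynomial.map (eval s) q ≠ 0 := by
        intro h
        apply hs
        have h2 := congrArg (fun r : Polynomial ℝ => r.coeff q.natDegree) h
        simpa [Polynomial.coeff_map, Polynomial.coeff_natDegree] using h2
      have hfin : {y : ℝ | Polynomial.eval y (Polynomial.map (eval s) q) = 0}.Finite := by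
        refine Set.Finite.subset (Polynomial.map (eval s) q).roots.toFinset.finite_toSet ?_
        intro y hy
        simp only [Multiset.mem_toFinset, Finset.mem_coe, Polynomial.mem_roots hmap,
          Polynomial.IsRoot]
        exact hy
      simpa [hS] using hfin.measure_zero volume
    have hmp : MeasurePreserving
        (fun x : Fin (n+1) → ℝ =>
          Prod.swap (MeasurableEquiv.piFinSuccAbove (fun _ => ℝ) 0 x))
        volume (volume.prod volume) := by
      exact Measure.measurePreserving_swap.comp
        (measurePreserving_piFinSuccAbove (fun _ : Fin (n+1) => (volume : Measure ℝ)) 0)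
    have hpre : (fun x : Fin (n+1) → ℝ =>
          Prod.swap (MeasurableEquiv.piFinSuccAbove (fun _ => ℝ) 0 x)) ⁻¹' S
        = {x | eval x p = 0} := by
      ext x
      have hx : (MeasurableEquiv.piFinSuccAbove (fun _ => ℝ) 0 x) = (x 0, Fin.tail x) := rfl
      simp only [Set.mem_preimage, hS, Set.mem_setOf_eq, hx, Prod.swap_prod_mk]
      rw [hqdef, ← eval_eq_eval_mv_eval', Fin.cons_self_tail]
    rw [ae_iff]
    have : {x : Fin (n+1) → ℝ | ¬ eval x p ≠ 0} = {x | eval x p = 0} := by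
      ext; simp
    rw [this, ← hpre, hmp.measure_preimage hSmeas.nullMeasurableSet, hnull]


private lemma mp_uncurry (M L : ℕ) : MeasurePreserving
    (fun (t : Fin M → Fin L → ℝ) (p : Fin M × Fin L) => t p.1 p.2)
    volume volume := by
  have hmeas : Measurable (fun (t : Fin M → Fin L → ℝ) (p : Fin M × Fin L) => t p.1 p.2) :=
    measurable_pi_lambda _ fun p => (measurable_pi_apply p.2).comp (measurable_pi_apply p.1)
  refine ⟨hmeas, ?_⟩
  have : (volume : Measure ((Fin M × Fin L) → ℝ)) = Measure.pi fun _ => volume := rfl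
  rw [this]
  refine (Measure.pi_eq fun s hs => ?_).symm
  rw [Measure.map_apply hmeas (MeasurableSet.univ_pi hs)]
  have hpre : (fun (t : Fin M → Fin L → ℝ) (p : Fin M × Fin L) => t p.1 p.2) ⁻¹' Set.pi Set.univ s
      = Set.pi Set.univ (fun i => Set.pi Set.univ fun j => s (i, j)) := by
    ext t
    simp only [Set.mem_preimage, Set.mem_pi, Set.mem_univ, forall_true_left, Prod.forall]
  rw [hpre]
  have : (volume : Measure (Fin M → Fin L → ℝ)) = Measure.pi fun _ => volume := rfl
  rw [this, Measure.pi_pi]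
  have : ∀ i : Fin M, (volume : Measure (Fin L → ℝ)) (Set.pi Set.univ fun j => s (i, j))
      = ∏ j : Fin L, volume (s (i, j)) := by
    intro i
    have h2 : (volume : Measure (Fin L → ℝ)) = Measure.pi fun _ => volume := rfl
    rw [h2, Measure.pi_pi]
  simp_rw [this]
  rw [Fintype.prod_prod_type]


open MvPolynomial in
private lemma polyAE2 {M L : ℕ} (p : MvPolynomial (Fin M × Fin L) ℝ) (hp : p ≠ 0) :
    ∀ᵐ t : Fin M → Fin L → ℝ ∂volume, eval (fun q : Fin M × Fin L => t q.1 q.2) p ≠ 0 := by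
  classical
  set e : Fin M × Fin L ≃ Fin (M * L) := finProdFinEquiv with he
  set Z : Set ((Fin M × Fin L) → ℝ) := {u | eval u p = 0} with hZ
  have hZmeas : MeasurableSet Z :=
    ((MvPolynomial.continuous_eval p).measurable) (measurableSet_singleton 0)
  have hZ0 : volume Z = 0 := by
    have hr : rename e p ≠ 0 := fun h => hp ((rename_injective e e.injective).eq_iff.mp
      (h.trans (map_zero (rename e)).symm))
    have h1 := polyAE (rename e p) hr
    have hG := volume_measurePreserving_piCongrLeft (fun _ : Fin M × Fin L => ℝ) e.symm
    rw [← hG.measure_preimage hZmeas.nullMeasurableSet]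
    have hpre : (MeasurableEquiv.piCongrLeft (fun _ => ℝ) e.symm) ⁻¹' Z
        = {x : Fin (M * L) → ℝ | eval x (rename e p) = 0} := by
      ext x
      simp only [Set.mem_preimage, hZ, Set.mem_setOf_eq, eval_rename]
      have : (MeasurableEquiv.piCongrLeft (fun _ => ℝ) e.symm) x = x ∘ e := by
        funext q
        show (Equiv.piCongrLeft (fun _ => ℝ) e.symm) x q = x (e q)
        have := Equiv.piCongrLeft_apply_apply (fun _ : Fin M × Fin L => ℝ) e.symm x (e q)
        simpa using this
      rw [this]
    rw [hpre]
    rw [ae_iff] at h1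
    convert h1 using 2
    ext x; simp
  have hmp := mp_uncurry M L
  rw [ae_iff]
  have : {t : Fin M → Fin L → ℝ | ¬ eval (fun q : Fin M × Fin L => t q.1 q.2) p ≠ 0}
      = (fun (t : Fin M → Fin L → ℝ) (q : Fin M × Fin L) => t q.1 q.2) ⁻¹' Z := by
    ext t; simp [hZ]
  rw [this, hmp.measure_preimage hZmeas.nullMeasurableSet, hZ0]


open MvPolynomial in
private lemma det_monomial_ne_zero {L M : ℕ} (E : Fin L → Fin M → ℕ)
    (hE : Function.Injective E) :
    (Matrix.of fun j ℓ : Fin L =>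
      ∏ i, (X (i, ℓ) : MvPolynomial (Fin M × Fin L) ℝ) ^ E j i).det ≠ 0 := by
  classical
  set d : Equiv.Perm (Fin L) → ((Fin M × Fin L) →₀ ℕ) :=
    fun σ => Finsupp.equivFunOnFinite.symm fun q => E (σ q.2) q.1 with hd
  have hdapp : ∀ σ (q : Fin M × Fin L), d σ q = E (σ q.2) q.1 := by
    intro σ q; simp [hd]
  have hmono : ∀ σ : Equiv.Perm (Fin L),
      (∏ ℓ, ∏ i, (X (i, ℓ) : MvPolynomial (Fin M × Fin L) ℝ) ^ E (σ ℓ) i)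
        = monomial (d σ) 1 := by
    intro σ
    rw [monomial_eq, C_1, one_mul, Finsupp.prod_fintype _ _ (fun q => pow_zero _)]
    rw [Fintype.prod_prod_type]
    rw [Finset.prod_comm]
    apply Finset.prod_congr rfl; intro ℓ _
    apply Finset.prod_congr rfl; intro i _
    rw [hdapp]
  have hdinj : Function.Injective d := by
    intro σ τ h
    apply Equiv.ext; intro ℓ
    refine hE ?_
    funext i
    have := congrArg (fun f : (Fin M × Fin L) →₀ ℕ => f (i, ℓ)) h
    simpa [hdapp] using this
  intro h0
  have hc := congrArg (MvPolynomial.coeff (d 1)) h0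
  rw [Matrix.det_apply] at hc
  simp only [Matrix.of_apply] at hc
  rw [MvPolynomial.coeff_sum] at hc
  have hterm : ∀ σ : Equiv.Perm (Fin L),
      MvPolynomial.coeff (d 1) (Equiv.Perm.sign σ •
        ∏ ℓ, ∏ i, (X (i, ℓ) : MvPolynomial (Fin M × Fin L) ℝ) ^ E (σ ℓ) i)
      = if σ = 1 then 1 else 0 := by
    intro σ
    rw [hmono σ, MvPolynomial.coeff_smul, coeff_monomial]
    by_cases hσ : σ = 1
    · subst hσ; simp
    · rw [if_neg (fun hh => hσ (hdinj hh)), if_neg hσ, smul_zero]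
  simp only [hterm] at hc
  rw [Finset.sum_ite_eq' Finset.univ (1 : Equiv.Perm (Fin L))] at hc
  simp at hc


open MvPolynomial in
private lemma det_zpow_ne_zero {L M : ℕ} (t : Fin M → Fin L → ℝ)
    (h0 : ∀ i ℓ, t i ℓ ≠ 0) (E : Fin L → Fin M → ℤ) (N : ℕ)
    (hN : ∀ j i, 0 ≤ E j i + N)
    (hdet : MvPolynomial.eval (fun q : Fin M × Fin L => t q.1 q.2)
      (Matrix.of fun j ℓ : Fin L =>
        ∏ i, (X (i, ℓ) : MvPolynomial (Fin M × Fin L) ℝ) ^ (E j i + N).toNat).det ≠ 0) :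
    (Matrix.of fun j ℓ : Fin L => ∏ i, t i ℓ ^ E j i).det ≠ 0 := by
  classical
  rw [RingHom.map_det] at hdet
  set u : Fin M × Fin L → ℝ := fun q => t q.1 q.2 with hu
  set C' : Matrix (Fin L) (Fin L) ℝ :=
    Matrix.of fun j ℓ : Fin L => ∏ i, t i ℓ ^ (E j i + N).toNat with hC'
  have hCeq : (MvPolynomial.eval u).mapMatrix (Matrix.of fun j ℓ : Fin L =>
      ∏ i, (X (i, ℓ) : MvPolynomial (Fin M × Fin L) ℝ) ^ (E j i + N).toNat) = C' := by
    ext j ℓ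
    simp [hC', hu]
  rw [hCeq] at hdet
  set dv : Fin L → ℝ := fun ℓ => ∏ i, t i ℓ ^ (-(N : ℤ)) with hdv
  have hdvne : ∀ ℓ, dv ℓ ≠ 0 := fun ℓ =>
    Finset.prod_ne_zero_iff.mpr fun i _ => zpow_ne_zero _ (h0 i ℓ)
  have hfact : (Matrix.of fun j ℓ : Fin L => ∏ i, t i ℓ ^ E j i)
      = C' * Matrix.diagonal dv := by
    ext j ℓ
    rw [Matrix.mul_diagonal]
    simp only [Matrix.of_apply, hC', hdv]
    rw [← Finset.prod_mul_distrib]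
    apply Finset.prod_congr rfl; intro i _
    rw [← zpow_natCast (t i ℓ) (E j i + N).toNat, Int.toNat_of_nonneg (hN j i),
      ← zpow_add₀ (h0 i ℓ)]
    ring_nf
  rw [hfact, Matrix.det_mul, Matrix.det_diagonal]
  exact mul_ne_zero hdet (Finset.prod_ne_zero_iff.mpr fun ℓ _ => hdvne ℓ)

private lemma rank_eq' (T L : ℕ) {κ : Type*} (A : Finset κ) (e : Fin L ≃ {x // x ∈ A})
    (c : κ → Fin L → ℝ)
    (hdet : (Matrix.of fun j ℓ : Fin L => c (e j : κ) ℓ).det ≠ 0)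
    (V : Submodule ℝ (Fin T × Fin L → ℝ)) :
    finrank ℝ ↥(⨆ x ∈ A, V.map (Matrix.toLin' (blockDiag T L (c x)))) = spT T L V := by
  classical
  suffices h : ∀ D : κ → ((Fin T × Fin L → ℝ) →ₗ[ℝ] (Fin T × Fin L → ℝ)),
      (∀ x v (p : Fin T × Fin L), D x v p = c x p.2 * v p) →
      finrank ℝ ↥(⨆ x ∈ A, V.map (D x)) = spT T L V by
    refine h _ fun x v p => ?_
    simp [Matrix.toLin'_apply, _root_.blockDiag, Matrix.mulVec_diagonal]
  intro D hDapp
  set C : Matrix (Fin L) (Fin L) ℝ := Matrix.of fun j ℓ => c (e j) ℓ with hC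
  have hCinv : C⁻¹ * C = 1 := Matrix.nonsing_inv_mul C (isUnit_iff_ne_zero.mpr hdet)
  set π : Fin L → ((Fin T × Fin L → ℝ) →ₗ[ℝ] (Fin T → ℝ)) :=
    fun k => LinearMap.funLeft ℝ ℝ (fun s : Fin T => (s, k)) with hπ
  have hπapp : ∀ k (v : Fin T × Fin L → ℝ) s, π k v s = v (s, k) := fun _ _ _ => rfl
  set Q : Submodule ℝ (Fin T × Fin L → ℝ) := ⨅ k, Submodule.comap (π k) (V.map (π k)) with hQ
  have hmemQ : ∀ w, w ∈ Q ↔ ∀ k, π k w ∈ V.map (π k) := by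
    intro w
    simp [hQ, Submodule.mem_iInf, Submodule.mem_comap]
  have hSQ : (⨆ x ∈ A, V.map (D x)) = Q := by
    apply le_antisymm
    · refine iSup₂_le fun x hx => ?_
      rintro _ ⟨v, hv, rfl⟩
      rw [hmemQ]
      intro k
      have hcol : π k (D x v) = c x k • π k v := by
        funext s
        rw [hπapp, hDapp]
        simp [hπapp, smul_eq_mul]
      rw [hcol]
      exact Submodule.smul_mem _ _ ⟨v, hv, rfl⟩
    · intro w hw
      rw [hmemQ] at hw
      choose v hvV hvw using fun k => hw k
      have hPmem : ∀ (k : Fin L) (u : Fin T × Fin L → ℝ), u ∈ V →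
          (fun p : Fin T × Fin L => if p.2 = k then u p else 0) ∈ ⨆ x ∈ A, V.map (D x) := by
        intro k u hu
        have heq : (fun p : Fin T × Fin L => if p.2 = k then u p else 0)
            = ∑ j : Fin L, C⁻¹ k j • D (e j : κ) u := by
          funext p
          rw [Finset.sum_apply]
          simp only [Pi.smul_apply, smul_eq_mul]
          have hsum : ∑ j : Fin L, C⁻¹ k j * c (e j : κ) p.2 = if k = p.2 then 1 else 0 := by
            have h2 := congrArg (fun Mm : Matrix (Fin L) (Fin L) ℝ => Mm k p.2) hCinv
            simpa [Matrix.mul_apply, Matrix.one_apply, hC] using h2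
          calc (if p.2 = k then u p else 0)
              = (if k = p.2 then (1:ℝ) else 0) * u p := by
                by_cases h : p.2 = k
                · simp [h]
                · rw [if_neg h, if_neg (fun hh => h hh.symm), zero_mul]
            _ = (∑ j : Fin L, C⁻¹ k j * c (e j : κ) p.2) * u p := by rw [hsum]
            _ = ∑ j : Fin L, C⁻¹ k j * (c (e j : κ) p.2 * u p) := by
                rw [Finset.sum_mul]; apply Finset.sum_congr rfl; intros; ring
            _ = ∑ j : Fin L, C⁻¹ k j * D (e j : κ) u p := by
                apply Finset.sum_congr rfl; intro j _; rw [hDapp]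
        rw [heq]
        refine Submodule.sum_mem _ fun j _ => Submodule.smul_mem _ _ ?_
        have hle : V.map (D (e j : κ)) ≤ ⨆ x ∈ A, V.map (D x) :=
          le_iSup₂ (f := fun x (_ : x ∈ A) => V.map (D x)) (e j : κ) (e j).2
        exact hle ⟨u, hu, rfl⟩
      have hwsum : w = ∑ k : Fin L,
          (fun p : Fin T × Fin L => if p.2 = k then v k p else 0) := by
        funext p
        rw [Finset.sum_apply, Finset.sum_eq_single p.2]
        · rw [if_pos rfl]
          have h3 := congrArg (fun f : Fin T → ℝ => f p.1) (hvw p.2)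
          exact h3.symm
        · intro b _ hb
          rw [if_neg (Ne.symm hb)]
        · intro h; exact absurd (Finset.mem_univ _) h
      rw [hwsum]
      exact Submodule.sum_mem _ fun k _ => hPmem k (v k) (hvV k)
  rw [hSQ]
  have hequiv : Q ≃ₗ[ℝ] (∀ k : Fin L, ↥(V.map (π k))) := by
    refine LinearEquiv.ofBijective
      ({ toFun := fun w k => ⟨π k w.1, (hmemQ w.1).mp w.2 k⟩
         map_add' := fun w w' => by
           funext k
           ext s
           simp
         map_smul' := fun r w => by
           funext k
           ext s
           simp } : Q →ₗ[ℝ] ∀ k : Fin L, ↥(V.map (π k))) ⟨?_, ?_⟩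
    · intro a b hab
      apply Subtype.ext
      funext p
      exact congrArg (fun f : ∀ k : Fin L, ↥(V.map (π k)) => (f p.2 : Fin T → ℝ) p.1) hab
    · intro u
      refine ⟨⟨fun p => (u p.2 : Fin T → ℝ) p.1, ?_⟩, ?_⟩
      · rw [hmemQ]
        intro k
        exact (u k).2
      · funext k
        ext s
        rfl
  rw [hequiv.finrank_eq, Module.finrank_pi_fintype]
  rfl


/-- Almost every `M`-tuple of block diagonal matrices `I_T ⊗ diag(t i)` (identified with
the point of `ℝ^{LM}` formed by the diagonals `t i`, with Lebesgue measure) satisfies the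
block linear independence condition. -/
theorem stmt12 (T L M : ℕ) (hT : 1 ≤ T) (hL : 1 ≤ L) (hM : 2 ≤ M) :
    ∀ᵐ t : Fin M → Fin L → ℝ ∂volume, BlockLinIndepCond T L M t := by
  classical
  have h0 : ∀ᵐ t : Fin M → Fin L → ℝ ∂volume, ∀ i ℓ, t i ℓ ≠ 0 := by
    rw [ae_all_iff]
    intro i
    rw [ae_all_iff]
    intro ℓ
    have h := polyAE2 (MvPolynomial.X (i, ℓ)) (MvPolynomial.X_ne_zero _)
    simpa using h
  set ST := {A : Finset (Fin M → ℤ) // A.card = L} with hST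
  have hcard : ∀ a : ST, Fintype.card {x // x ∈ a.1} = L := fun a => by
    rw [Fintype.card_coe]; exact a.2
  set eA : ∀ a : ST, Fin L ≃ {x // x ∈ a.1} :=
    fun a => (Fintype.equivFinOfCardEq (hcard a)).symm with heA
  set Nb : ST → ℕ := fun a => a.1.sup fun x => Finset.univ.sup fun i => (-(x i)).toNat with hNb
  have hNpos : ∀ (a : ST) (j : Fin L) (i : Fin M), 0 ≤ ((eA a j : Fin M → ℤ) i) + (Nb a : ℤ) := by
    intro a j i
    set x : Fin M → ℤ := (eA a j : Fin M → ℤ) with hx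
    have hxA : x ∈ a.1 := (eA a j).2
    have h1 : (-(x i)).toNat ≤ Nb a := by
      refine le_trans (Finset.le_sup (f := fun i' : Fin M => (-(x i')).toNat)
        (Finset.mem_univ i)) ?_
      exact Finset.le_sup (f := fun y : Fin M → ℤ => Finset.univ.sup fun i' => (-(y i')).toNat) hxA
    have h2 : -(x i) ≤ ((-(x i)).toNat : ℤ) := Int.self_le_toNat _
    have h3 : (((-(x i)).toNat : ℕ) : ℤ) ≤ (Nb a : ℤ) := Int.ofNat_le.mpr h1
    linarith
  have hEinj : ∀ a : ST, Function.Injective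
      (fun j (i : Fin M) => (((eA a j : Fin M → ℤ) i) + (Nb a : ℤ)).toNat) := by
    intro a j j' h
    apply (eA a).injective
    apply Subtype.coe_injective
    funext i
    have h2 := congrFun h i
    simp only at h2
    have h4 : ((eA a j : Fin M → ℤ)) i = ((eA a j' : Fin M → ℤ)) i := by
      have p1 := hNpos a j i
      have p2 := hNpos a j' i
      omega
    exact h4
  have h1 : ∀ᵐ t : Fin M → Fin L → ℝ ∂volume, ∀ a : ST,
      MvPolynomial.eval (fun q : Fin M × Fin L => t q.1 q.2)
        (Matrix.of fun j ℓ : Fin L =>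
          ∏ i, (MvPolynomial.X (i, ℓ) : MvPolynomial (Fin M × Fin L) ℝ) ^
            (((eA a j : Fin M → ℤ) i) + (Nb a : ℤ)).toNat).det ≠ 0 := by
    rw [ae_all_iff]
    intro a
    exact polyAE2 _ (det_monomial_ne_zero _ (hEinj a))
  filter_upwards [h0, h1] with t ht0 ht1
  intro A hA V
  set a : ST := ⟨A, hA⟩ with ha
  have hdet : (Matrix.of fun j ℓ : Fin L =>
      ∏ i, t i ℓ ^ ((eA a j : Fin M → ℤ) i)).det ≠ 0 := by
    exact det_zpow_ne_zero t ht0 (fun j i => (eA a j : Fin M → ℤ) i) (Nb a)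
      (fun j i => hNpos a j i) (ht1 a)
  exact rank_eq' T L A (eA a) (fun x ℓ => ∏ i, t i ℓ ^ x i) hdet V
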